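/- Let E be a Banach lattice and let dx denote Lebesgue measure on ℝ^d. Suppose that for some q ∈ [1,∞) there is a constant C such that for each finite collection D of dyadic cubes and each locally integrable f: ℝ^d → E there exists a sparse subcollection S ⊆ D with ‖M̃^{dx}_D f(x)‖_E ≤ C · A^{dx}_{q,S}(‖f‖_E)(x) for almost every x. Then E has the Hardy–Littlewood property; that is, for every p ∈ (1,∞), sup_D ‖M̃^{dx}_D‖_{L^p(dx;E) → L^p(dx;E)} < ∞, where the supremum is over all finite collections D of dyadic cubes. -/

import Mathlib

open MeasureTheory ENNReal Set

attribute [local instance] Classical.propDecidable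

/-- A dyadic cube in `ℝ^d`, given by a generation `k : ℤ` and a position `m : Fin d → ℤ`;
its underlying set is `∏_i [2^k m i, 2^k (m i + 1))`. -/
structure DyadicCube (d : ℕ) where
  k : ℤ
  m : Fin d → ℤ
deriving DecidableEq

/-- The underlying set of a dyadic cube. -/
def DyadicCube.set {d : ℕ} (Q : DyadicCube d) : Set (Fin d → ℝ) :=
  {x | ∀ i, (2 : ℝ) ^ Q.k * Q.m i ≤ x i ∧ x i < (2 : ℝ) ^ Q.k * (Q.m i + 1)}

/-- A (non-dyadic) axis-parallel cube in `ℝ^d`, given by its corner and side length. -/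
structure Cube (d : ℕ) where
  c : Fin d → ℝ
  len : ℝ
  len_pos : 0 < len

/-- The underlying set of an axis-parallel cube. -/
def Cube.set {d : ℕ} (Q : Cube d) : Set (Fin d → ℝ) :=
  {x | ∀ i, Q.c i ≤ x i ∧ x i < Q.c i + Q.len}

/-- The average `⟨f⟩^μ_A = (1/μ(A)) ∫_A f dμ` of a vector-valued function. -/
noncomputable def avg {d : ℕ} {E : Type*} [NormedAddCommGroup E] [NormedSpace ℝ E]
    (μ : Measure (Fin d → ℝ)) (A : Set (Fin d → ℝ)) (f : (Fin d → ℝ) → E) : E :=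
  (μ A).toReal⁻¹ • ∫ x in A, f x ∂μ

/-- The dyadic lattice Hardy–Littlewood maximal operator
`M̃^μ_D f (x) = sup_{Q ∈ D} ⟨|f|⟩^μ_Q 1_Q(x)` (a lattice supremum of finitely many
positive elements, realized as a fold of `⊔` with base point `0`). -/
noncomputable def dyadicMaximal {d : ℕ} {E : Type*} [NormedAddCommGroup E] [Lattice E] [HasSolidNorm E] [IsOrderedAddMonoid E]
    [NormedSpace ℝ E] (μ : Measure (Fin d → ℝ)) (D : Finset (DyadicCube d))
    (f : (Fin d → ℝ) → E) (x : Fin d → ℝ) : E :=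
  D.fold (· ⊔ ·) 0 fun Q => Set.indicator Q.set (fun _ => avg μ Q.set fun y => |f y|) x

/-- A collection of dyadic cubes is sparse (w.r.t. `μ`): each `Q` in the collection carries a
measurable subset `E_Q ⊆ Q` with `μ(Q) ≤ 2 μ(E_Q)`, the subsets being pairwise disjoint. -/
def IsSparse {d : ℕ} (μ : Measure (Fin d → ℝ)) (S : Finset (DyadicCube d)) : Prop :=
  ∃ ES : DyadicCube d → Set (Fin d → ℝ),
    (∀ Q ∈ S, ES Q ⊆ Q.set ∧ MeasurableSet (ES Q) ∧ μ Q.set ≤ 2 * μ (ES Q)) ∧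
    (S : Set (DyadicCube d)).Pairwise fun Q Q' => Disjoint (ES Q) (ES Q')

/-- The sparse operator `A^μ_{q,S} f (x) = (∑_{Q ∈ S} ⟨|f|⟩_Q^q 1_Q(x))^{1/q}` acting on
scalar-valued functions. -/
noncomputable def sparseOp {d : ℕ} (μ : Measure (Fin d → ℝ)) (q : ℝ)
    (S : Finset (DyadicCube d)) (f : (Fin d → ℝ) → ℝ) (x : Fin d → ℝ) : ℝ :=
  (∑ Q ∈ S, Set.indicator Q.set (fun _ => avg μ Q.set (fun y => |f y|) ^ q) x) ^ (1 / q)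

/-- `q`-convexity of a Banach lattice with constant `C`:
`‖(∑ |e k|^q)^{1/q}‖ ≤ C (∑ ‖e k‖^q)^{1/q}`. The Krivine element `(∑ |e k|^q)^{1/q}` is
characterized as the least upper bound of all combinations `∑ a k • |e k|` where the
nonnegative coefficients `a` lie in the unit ball of the norm dual to the `ℓ^q`-norm. -/
def IsQConvexWith (E : Type*) [NormedAddCommGroup E] [Lattice E] [HasSolidNorm E] [IsOrderedAddMonoid E] [NormedSpace ℝ E]
    (q C : ℝ) : Prop :=
  ∀ (n : ℕ) (e : Fin n → E) (s : E),
    IsLUB {x : E | ∃ a : Fin n → ℝ, (∀ k, 0 ≤ a k) ∧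
        (∀ t : Fin n → ℝ, (∀ k, 0 ≤ t k) → ∑ k, a k * t k ≤ (∑ k, t k ^ q) ^ (1 / q)) ∧
        x = ∑ k, a k • |e k|} s →
    ‖s‖ ≤ C * (∑ k, ‖e k‖ ^ q) ^ (1 / q)

/-- The Hardy–Littlewood property of a Banach lattice `E`: for some `p ∈ (1,∞)` the dyadic
lattice maximal operators (w.r.t. Lebesgue measure) are bounded on `L^p(dx; E)` uniformly in
the finite collection of dyadic cubes. -/
def HasHLProperty (d : ℕ) (E : Type*) [NormedAddCommGroup E] [Lattice E] [HasSolidNorm E] [IsOrderedAddMonoid E] [NormedSpace ℝ E] : Prop :=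
  ∃ p : ℝ, 1 < p ∧ ∃ C : ℝ, ∀ (D : Finset (DyadicCube d)) (f : (Fin d → ℝ) → E),
    MemLp f (ENNReal.ofReal p) volume →
    eLpNorm (dyadicMaximal volume D f) (ENNReal.ofReal p) volume ≤
      ENNReal.ofReal C * eLpNorm f (ENNReal.ofReal p) volume

/-- Order continuity of a Banach lattice: every downward directed set with infimum `0`
contains elements of arbitrarily small norm cofinally (i.e. the corresponding decreasing net
converges to `0` in norm). -/
def IsOrderContinuous (E : Type*) [NormedAddCommGroup E] [Lattice E] [HasSolidNorm E] [IsOrderedAddMonoid E] : Prop :=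
  ∀ A : Set E, A.Nonempty → DirectedOn (· ≥ ·) A → IsGLB A 0 →
    ∀ ε : ℝ, 0 < ε → ∃ a ∈ A, ∀ b ∈ A, b ≤ a → ‖b‖ < ε

/-!
Since `q ≥ 1`, the sparse operator `A_{q,S}` is dominated by `A_{1,S} g = ∑_{Q ∈ S} ⟨g⟩_Q 1_Q`,
so it suffices to bound `A_{1,S}` on `L^p` uniformly in `S`. With `T = A_{1,S} g`,
`‖T‖_p^p = ∫ T · T^{p-1} = ∑_Q ⟨g⟩_Q ∫_Q T^{p-1}`, and `|Q| ≤ 2 |E_Q|` with disjoint `E_Q`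
turns this into `≤ 2 ∫ M g · M (T^{p-1})`, `M` the dyadic maximal function over `S`.
Hölder and Doob's inequality `‖M h‖_p ≤ p' ‖h‖_p`, `p' = p / (p - 1)` (from
`t |{M h > t}| ≤ ∫_{M h > t} h`, proved by selecting maximal dyadic cubes) bound this by
`2 p p' ‖g‖_p ‖T‖_p^{p-1}`; as `‖T‖_p < ∞` for finitely many cubes, `‖T‖_p ≤ 2 p p' ‖g‖_p`.
-/

lemma Int.floor_div_two_zpow_of_le {k k' : ℤ} (hk : k ≤ k') (z : ℝ) :
    ⌊z / 2 ^ k'⌋ = ⌊z / 2 ^ k⌋ / 2 ^ (k' - k).toNat := by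
  have h : (2 : ℝ) ^ k' = 2 ^ k * ((2 ^ (k' - k).toNat : ℕ) : ℝ) := by
    rw [Nat.cast_pow, Nat.cast_ofNat, ← zpow_natCast, ← zpow_add₀ two_ne_zero,
      Int.toNat_of_nonneg (by omega), add_sub_cancel]
  rw [h, ← div_div, Int.floor_div_natCast]
  norm_cast

lemma Finset.exists_pairwiseDisjoint_subfamily_of_nested {α : Type*} (𝒜 : Finset (Set α))
    (hnest : ∀ A ∈ 𝒜, ∀ B ∈ 𝒜, (A ∩ B).Nonempty → A ⊆ B ∨ B ⊆ A) :
    ∃ 𝒜' ⊆ 𝒜, (∀ A ∈ 𝒜, ∃ B ∈ 𝒜', A ⊆ B) ∧ (𝒜' : Set (Set α)).PairwiseDisjoint id := by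
  classical
  refine ⟨𝒜.filter fun A => ∀ B ∈ 𝒜, A ⊆ B → A = B, filter_subset _ _, fun A hA => ?_, ?_⟩
  · obtain ⟨B, hB, hBmax⟩ := Finset.exists_maximal (s := 𝒜.filter (A ⊆ ·)) ⟨A, by simp [hA]⟩
    rw [mem_filter] at hB
    refine ⟨B, mem_filter.2 ⟨hB.1, fun C hC hBC => ?_⟩, hB.2⟩
    exact hBC.antisymm (hBmax (mem_filter.2 ⟨hC, hB.2.trans hBC⟩) hBC)
  · intro A hA B hB hAB
    rw [coe_filter, mem_ofPred_eq] at hA hB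
    refine Set.disjoint_iff_inter_eq_empty.2 (Set.not_nonempty_iff_eq_empty.1 fun hne => ?_)
    rcases hnest A hA.1 B hB.1 hne with h | h
    · exact hAB (hA.2 B hB.1 h)
    · exact hAB (hB.2 A hA.1 h).symm

lemma lintegral_Ioo_rpow {r : ℝ} (hr : -1 < r) {b : ℝ} (hb : 0 ≤ b) :
    ∫⁻ t in Ioo 0 b, ENNReal.ofReal (t ^ r) = ENNReal.ofReal (b ^ (r + 1) / (r + 1)) := by
  have hint : IntegrableOn (fun t : ℝ => t ^ r) (Ioc 0 b) :=
    (intervalIntegrable_iff_integrableOn_Ioc_of_le hb).1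
      (intervalIntegral.intervalIntegrable_rpow' hr)
  rw [setLIntegral_congr Ioo_ae_eq_Ioc, ← ofReal_integral_eq_lintegral_ofReal hint
    (ae_restrict_of_forall_mem measurableSet_Ioc fun t ht => Real.rpow_nonneg ht.1.le r),
    ← intervalIntegral.integral_of_le hb, integral_rpow (Or.inl hr),
    Real.zero_rpow (by linarith), sub_zero]

lemma lintegral_rpow_mul_setLIntegral_lt {α : Type*} [MeasurableSpace α] {μ : Measure α}
    [SFinite μ] {G : α → ℝ} (hG : Measurable G) (hG0 : ∀ x, 0 ≤ G x) {h : α → ℝ≥0∞}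
    (hh : AEMeasurable h μ) {r : ℝ} (hr : -1 < r) :
    ∫⁻ t in Ioi 0, ENNReal.ofReal (t ^ r) * ∫⁻ x in {x | t < G x}, h x ∂μ =
      ∫⁻ x, h x * ENNReal.ofReal (G x ^ (r + 1) / (r + 1)) ∂μ := by
  set Φ : ℝ → α → ℝ≥0∞ := fun t x =>
    {x | t < G x}.indicator (fun x => ENNReal.ofReal (t ^ r) * h x) x
  have hΦ : AEMeasurable (Function.uncurry Φ) ((volume.restrict (Ioi 0)).prod μ) :=
    ((ENNReal.measurable_ofReal.comp (measurable_fst.pow_const _)).aemeasurable.mul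
      hh.aestronglyMeasurable.comp_snd.aemeasurable).indicator
      (measurableSet_lt measurable_fst (hG.comp measurable_snd))
  have hrpow : Measurable fun t : ℝ => ENNReal.ofReal (t ^ r) := by fun_prop
  calc ∫⁻ t in Ioi 0, ENNReal.ofReal (t ^ r) * ∫⁻ x in {x | t < G x}, h x ∂μ
      = ∫⁻ t in Ioi 0, ∫⁻ x, Φ t x ∂μ := lintegral_congr fun t => by
        rw [lintegral_indicator (measurableSet_lt measurable_const hG),
          lintegral_const_mul'' _ hh.restrict]
    _ = ∫⁻ x, (∫⁻ t in Ioi 0,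
          (Iio (G x)).indicator (fun t => ENNReal.ofReal (t ^ r)) t * h x) ∂μ := by
        rw [lintegral_lintegral_swap hΦ]
        refine lintegral_congr fun x => lintegral_congr fun t => ?_
        by_cases ht : t < G x <;> simp [Φ, ht]
    _ = ∫⁻ x, h x * ENNReal.ofReal (G x ^ (r + 1) / (r + 1)) ∂μ := lintegral_congr fun x => by
        rw [lintegral_mul_const _ (hrpow.indicator measurableSet_Iio),
          lintegral_indicator measurableSet_Iio, Measure.restrict_restrict measurableSet_Iio,
          Iio_inter_Ioi, lintegral_Ioo_rpow hr (hG0 x), mul_comm]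

lemma rpow_one_div_le_of_le_mul_rpow {p q : ℝ} (hpq : p.HolderConjugate q) {I K : ℝ≥0∞}
    (hI : I ≠ ∞) (h : I ≤ K * I ^ (1 / q)) : I ^ (1 / p) ≤ K := by
  rcases eq_or_ne I 0 with rfl | hI0
  · rw [ENNReal.zero_rpow_of_pos (one_div_pos.2 hpq.pos)]
    exact zero_le
  have hq0 : I ^ (1 / q) ≠ 0 := (ENNReal.rpow_pos (pos_iff_ne_zero.2 hI0) hI).ne'
  have hqt : I ^ (1 / q) ≠ ∞ := ENNReal.rpow_ne_top_of_nonneg (one_div_nonneg.2 hpq.symm.nonneg) hI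
  refine (ENNReal.mul_le_mul_iff_left hq0 hqt).1 ?_
  calc I ^ (1 / p) * I ^ (1 / q) = I := by
        rw [← ENNReal.rpow_add _ _ hI0 hI, one_div, one_div, hpq.inv_add_inv_eq_one,
          ENNReal.rpow_one]
    _ ≤ K * I ^ (1 / q) := h

lemma Real.sum_rpow_rpow_one_div_le_sum {ι : Type*} (s : Finset ι) {f : ι → ℝ}
    (hf : ∀ i ∈ s, 0 ≤ f i) {q : ℝ} (hq : 1 ≤ q) :
    (∑ i ∈ s, f i ^ q) ^ (1 / q) ≤ ∑ i ∈ s, f i := by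
  classical
  induction s using Finset.induction_on with
  | empty => simp [Real.zero_rpow (inv_ne_zero (by linarith : q ≠ 0))]
  | insert a s ha ih =>
    have hfa := hf a (Finset.mem_insert_self a s)
    have hfs : ∀ i ∈ s, 0 ≤ f i := fun i hi => hf i (Finset.mem_insert_of_mem hi)
    rw [Finset.sum_insert ha, Finset.sum_insert ha]
    calc (f a ^ q + ∑ i ∈ s, f i ^ q) ^ (1 / q)
        ≤ (f a ^ q) ^ (1 / q) + (∑ i ∈ s, f i ^ q) ^ (1 / q) :=
          Real.rpow_add_le_add_rpow (Real.rpow_nonneg hfa q)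
            (Finset.sum_nonneg fun i hi => Real.rpow_nonneg (hfs i hi) q) (by positivity)
            ((div_le_one (by linarith)).2 hq)
      _ ≤ f a + ∑ i ∈ s, f i := by
          rw [← Real.rpow_mul hfa, mul_one_div_cancel (by linarith), Real.rpow_one]
          exact add_le_add_right (ih hfs) _

lemma eLpNorm_ofReal_eq_lintegral {α ε : Type*} [MeasurableSpace α] [ENorm ε] {μ : Measure α}
    {p : ℝ} (hp : 0 < p) (f : α → ε) :
    eLpNorm f (ENNReal.ofReal p) μ = (∫⁻ x, ‖f x‖ₑ ^ p ∂μ) ^ (1 / p) := by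
  rw [eLpNorm_eq_lintegral_rpow_enorm_toReal (by simpa using hp) ofReal_ne_top, toReal_ofReal hp.le]

namespace DyadicCube

variable {d : ℕ}

lemma mem_set_iff_floor {Q : DyadicCube d} {x : Fin d → ℝ} :
    x ∈ Q.set ↔ ∀ i, ⌊x i / 2 ^ Q.k⌋ = Q.m i := by
  have h2 : (0 : ℝ) < 2 ^ Q.k := zpow_pos two_pos _
  simp only [DyadicCube.set, mem_ofPred_eq, Int.floor_eq_iff, le_div_iff₀ h2, div_lt_iff₀ h2,
    mul_comm]

lemma set_subset_of_k_le {Q Q' : DyadicCube d} (hk : Q.k ≤ Q'.k)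
    (h : (Q.set ∩ Q'.set).Nonempty) : Q.set ⊆ Q'.set := by
  obtain ⟨x, hx, hx'⟩ := h
  intro y hy
  rw [mem_set_iff_floor] at hx hx' hy ⊢
  intro i
  rw [← hx' i, Int.floor_div_two_zpow_of_le hk, Int.floor_div_two_zpow_of_le hk, hy i, hx i]

lemma set_subset_or_subset {Q Q' : DyadicCube d} (h : (Q.set ∩ Q'.set).Nonempty) :
    Q.set ⊆ Q'.set ∨ Q'.set ⊆ Q.set :=
  (le_total Q.k Q'.k).imp (set_subset_of_k_le · h)
    (set_subset_of_k_le · (by rwa [inter_comm]))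

lemma set_eq_pi (Q : DyadicCube d) :
    Q.set = univ.pi fun i => Ico ((2 : ℝ) ^ Q.k * Q.m i) (2 ^ Q.k * (Q.m i + 1)) := by
  ext x
  simp [DyadicCube.set]

lemma measurableSet_set (Q : DyadicCube d) : MeasurableSet Q.set := by
  rw [set_eq_pi]
  exact .univ_pi fun _ => measurableSet_Ico

lemma set_subset_Icc (Q : DyadicCube d) :
    Q.set ⊆ Icc (fun i => (2 : ℝ) ^ Q.k * Q.m i) (fun i => 2 ^ Q.k * (Q.m i + 1)) := by
  rw [set_eq_pi, ← pi_univ_Icc]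
  exact pi_mono fun _ _ => Ico_subset_Icc_self

lemma measure_set_lt_top (μ : Measure (Fin d → ℝ)) [IsLocallyFiniteMeasure μ]
    (Q : DyadicCube d) : μ Q.set < ∞ :=
  (measure_mono Q.set_subset_Icc).trans_lt isCompact_Icc.measure_lt_top

lemma integrableOn_set {E : Type*} [NormedAddCommGroup E] {μ : Measure (Fin d → ℝ)}
    {f : (Fin d → ℝ) → E} (hf : LocallyIntegrable f μ) (Q : DyadicCube d) :
    IntegrableOn f Q.set μ :=
  (hf.integrableOn_isCompact isCompact_Icc).mono_set Q.set_subset_Icc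

end DyadicCube

section DyadicMaximal

variable {d : ℕ} {μ : Measure (Fin d → ℝ)} {F : Finset (DyadicCube d)}
  {h : (Fin d → ℝ) → ℝ≥0∞} {x : Fin d → ℝ}

noncomputable def dyadicLMaximal (μ : Measure (Fin d → ℝ)) (F : Finset (DyadicCube d))
    (h : (Fin d → ℝ) → ℝ≥0∞) (x : Fin d → ℝ) : ℝ≥0∞ :=
  F.sup fun Q => Q.set.indicator (fun _ => ⨍⁻ y in Q.set, h y ∂μ) x

lemma lt_dyadicLMaximal_iff {t : ℝ≥0∞} :
    t < dyadicLMaximal μ F h x ↔ ∃ Q ∈ F, x ∈ Q.set ∧ t < ⨍⁻ y in Q.set, h y ∂μ := by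
  simp only [dyadicLMaximal, Finset.lt_sup_iff]
  refine exists_congr fun Q => and_congr_right fun _ => ?_
  by_cases hx : x ∈ Q.set <;> simp [hx]

lemma setLAverage_le_dyadicLMaximal {Q : DyadicCube d} (hQ : Q ∈ F) (hx : x ∈ Q.set) :
    ⨍⁻ y in Q.set, h y ∂μ ≤ dyadicLMaximal μ F h x :=
  (indicator_of_mem hx _).symm.le.trans <| Finset.le_sup (f := fun Q : DyadicCube d =>
    Q.set.indicator (fun _ => ⨍⁻ y in Q.set, h y ∂μ) x) hQ

lemma measurable_dyadicLMaximal : Measurable (dyadicLMaximal μ F h) := by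
  have : dyadicLMaximal μ F h = F.sup fun Q => Q.set.indicator fun _ => ⨍⁻ y in Q.set, h y ∂μ := by
    ext x
    simp [dyadicLMaximal, Finset.sup_apply]
  rw [this]
  exact Finset.sup_induction measurable_const (fun _ h₁ _ h₂ => h₁.sup h₂)
    fun Q _ => measurable_const.indicator Q.measurableSet_set

theorem mul_measure_lt_dyadicLMaximal_le (t : ℝ≥0∞) :
    t * μ {x | t < dyadicLMaximal μ F h x} ≤
      ∫⁻ x in {x | t < dyadicLMaximal μ F h x}, h x ∂μ := by
  classical
  set 𝒜 := (F.filter fun Q => t < ⨍⁻ y in Q.set, h y ∂μ).image DyadicCube.set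
  have h𝒜 : ∀ A ∈ 𝒜, ∃ Q ∈ F, t < ⨍⁻ y in Q.set, h y ∂μ ∧ Q.set = A := by
    simp [𝒜, and_assoc]
  obtain ⟨𝒜', h𝒜', hcover, hdisj⟩ := Finset.exists_pairwiseDisjoint_subfamily_of_nested 𝒜 <| by
    intro A hA B hB hAB
    obtain ⟨Q, -, -, rfl⟩ := h𝒜 A hA
    obtain ⟨Q', -, -, rfl⟩ := h𝒜 B hB
    exact DyadicCube.set_subset_or_subset hAB
  have hmeas : ∀ A ∈ 𝒜', MeasurableSet A := fun A hA => by
    obtain ⟨Q, -, -, rfl⟩ := h𝒜 A (h𝒜' hA)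
    exact Q.measurableSet_set
  have hlevel : {x | t < dyadicLMaximal μ F h x} = ⋃ A ∈ 𝒜', A := by
    ext x
    simp only [mem_ofPred_eq, lt_dyadicLMaximal_iff, mem_iUnion₂, exists_prop]
    constructor
    · rintro ⟨Q, hQ, hx, ht⟩
      obtain ⟨A, hA, hQA⟩ := hcover Q.set (Finset.mem_image_of_mem _ (by simp [hQ, ht]))
      exact ⟨A, hA, hQA hx⟩
    · rintro ⟨A, hA, hx⟩
      obtain ⟨Q, hQ, ht, rfl⟩ := h𝒜 A (h𝒜' hA)
      exact ⟨Q, hQ, hx, ht⟩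
  rw [hlevel, measure_biUnion_finset (f := fun A => A) hdisj hmeas,
    lintegral_biUnion_finset (t := fun A => A) hdisj hmeas,
    Finset.mul_sum]
  refine Finset.sum_le_sum fun A hA => ?_
  obtain ⟨Q, -, ht, rfl⟩ := h𝒜 A (h𝒜' hA)
  exact ENNReal.mul_le_of_le_div (setLAverage_eq μ h Q.set ▸ ht.le)

theorem lintegral_dyadicLMaximal_rpow_le_lintegral_mul [SFinite μ] {p : ℝ} (hp : 1 < p)
    (hh : AEMeasurable h μ) (hM : ∀ x, dyadicLMaximal μ F h x ≠ ∞) :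
    ∫⁻ x, dyadicLMaximal μ F h x ^ p ∂μ ≤
      ENNReal.ofReal (p / (p - 1)) * ∫⁻ x, h x * dyadicLMaximal μ F h x ^ (p - 1) ∂μ := by
  set M := dyadicLMaximal μ F h
  set Mr : (Fin d → ℝ) → ℝ := fun x => (M x).toReal
  have hMr : Measurable Mr := measurable_dyadicLMaximal.ennreal_toReal
  have hrpow : ∀ {s : ℝ} x, 0 ≤ s → ENNReal.ofReal (Mr x ^ s) = M x ^ s := fun x hs => by
    rw [toReal_rpow, ofReal_toReal (rpow_ne_top_of_nonneg hs (hM x))]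
  have hweak : ∀ t ∈ Ioi (0 : ℝ), μ {x | t < Mr x} * ENNReal.ofReal (t ^ (p - 1)) ≤
      ENNReal.ofReal (t ^ (p - 2)) * ∫⁻ x in {x | t < Mr x}, h x ∂μ := fun t ht => by
    have hlevel : {x | t < Mr x} = {x | ENNReal.ofReal t < M x} := by
      ext x
      exact (ofReal_lt_iff_lt_toReal (le_of_lt ht) (hM x)).symm
    have hpow : ENNReal.ofReal (t ^ (p - 1)) = ENNReal.ofReal t * ENNReal.ofReal (t ^ (p - 2)) := by
      rw [← ofReal_mul (le_of_lt ht), ← Real.rpow_one_add' (le_of_lt ht) (by linarith)]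
      ring_nf
    rw [hlevel, hpow]
    calc _ = ENNReal.ofReal (t ^ (p - 2)) *
          (ENNReal.ofReal t * μ {x | ENNReal.ofReal t < M x}) := by ring
      _ ≤ _ := mul_le_mul_right (mul_measure_lt_dyadicLMaximal_le _) _
  calc ∫⁻ x, M x ^ p ∂μ = ∫⁻ x, ENNReal.ofReal (Mr x ^ p) ∂μ :=
        lintegral_congr fun x => (hrpow x (by linarith)).symm
    _ = ENNReal.ofReal p * ∫⁻ t in Ioi 0, μ {x | t < Mr x} * ENNReal.ofReal (t ^ (p - 1)) :=
        lintegral_rpow_eq_lintegral_meas_lt_mul μ (ae_of_all _ fun _ => toReal_nonneg)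
          hMr.aemeasurable (by linarith)
    _ ≤ ENNReal.ofReal p *
          ∫⁻ t in Ioi 0, ENNReal.ofReal (t ^ (p - 2)) * ∫⁻ x in {x | t < Mr x}, h x ∂μ :=
        mul_le_mul_right (setLIntegral_mono' measurableSet_Ioi hweak) _
    _ = ENNReal.ofReal p * ∫⁻ x, h x * ENNReal.ofReal (Mr x ^ (p - 1) / (p - 1)) ∂μ := by
        rw [lintegral_rpow_mul_setLIntegral_lt hMr (fun _ => toReal_nonneg) hh (by linarith),
          show p - 2 + 1 = p - 1 by ring]
    _ = ENNReal.ofReal (p / (p - 1)) * ∫⁻ x, h x * M x ^ (p - 1) ∂μ := by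
        simp_rw [ENNReal.ofReal_div_of_pos (by linarith : 0 < p - 1),
          hrpow _ (by linarith : 0 ≤ p - 1), div_eq_mul_inv, ← mul_assoc]
        rw [lintegral_mul_const' _ _ (by simpa using hp)]
        ring

end DyadicMaximal

section SparseOperator

variable {d : ℕ} {μ : Measure (Fin d → ℝ)} {S F : Finset (DyadicCube d)}
  {g h : (Fin d → ℝ) → ℝ≥0∞} {x : Fin d → ℝ}

/-- The sparse operator `A_{1,S}` on `ℝ≥0∞`-valued functions. -/
noncomputable def lsparseOp (μ : Measure (Fin d → ℝ)) (S : Finset (DyadicCube d))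
    (h : (Fin d → ℝ) → ℝ≥0∞) (x : Fin d → ℝ) : ℝ≥0∞ :=
  ∑ Q ∈ S, Q.set.indicator (fun _ => ⨍⁻ y in Q.set, h y ∂μ) x

lemma measurable_lsparseOp : Measurable (lsparseOp μ S h) :=
  Finset.measurable_sum _ fun Q _ => measurable_const.indicator Q.measurableSet_set

lemma dyadicLMaximal_le_lsparseOp : dyadicLMaximal μ F h x ≤ lsparseOp μ F h x :=
  Finset.sup_le fun _ hQ => Finset.single_le_sum (f := fun Q : DyadicCube d =>
    Q.set.indicator (fun _ => ⨍⁻ y in Q.set, h y ∂μ) x) (fun _ _ => zero_le) hQ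

lemma lsparseOp_le_sum : lsparseOp μ S h x ≤ ∑ Q ∈ S, ⨍⁻ y in Q.set, h y ∂μ :=
  Finset.sum_le_sum fun _ _ => indicator_le_self' (fun _ _ => zero_le) x

lemma lintegral_lsparseOp_rpow_lt_top [IsLocallyFiniteMeasure μ]
    (hfin : ∀ Q ∈ S, ⨍⁻ y in Q.set, h y ∂μ ≠ ∞) {p : ℝ} (hp : 0 < p) :
    ∫⁻ x, lsparseOp μ S h x ^ p ∂μ < ∞ := by
  set B := ∑ Q ∈ S, ⨍⁻ y in Q.set, h y ∂μ
  set U := ⋃ Q ∈ S, Q.set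
  have hU : MeasurableSet U := .biUnion S.countable_toSet fun Q _ => Q.measurableSet_set
  have hbound : ∀ x, lsparseOp μ S h x ^ p ≤ U.indicator (fun _ => B ^ p) x := fun x => by
    by_cases hx : x ∈ U
    · rw [indicator_of_mem hx]
      exact rpow_le_rpow lsparseOp_le_sum hp.le
    · have : lsparseOp μ S h x = 0 :=
        Finset.sum_eq_zero fun Q hQ => indicator_of_notMem (fun hxQ => hx (mem_biUnion hQ hxQ)) _
      rw [this, zero_rpow_of_pos hp]
      exact zero_le
  calc ∫⁻ x, lsparseOp μ S h x ^ p ∂μ ≤ ∫⁻ x, U.indicator (fun _ => B ^ p) x ∂μ :=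
        lintegral_mono hbound
    _ = B ^ p * μ U := by
        rw [lintegral_indicator hU, setLIntegral_const]
    _ < ∞ := mul_lt_top (rpow_lt_top_of_nonneg hp.le (sum_ne_top.2 hfin))
        (measure_biUnion_lt_top S.finite_toSet fun Q _ => Q.measure_set_lt_top μ)

theorem lintegral_dyadicLMaximal_rpow_le [IsLocallyFiniteMeasure μ] {p q : ℝ}
    (hpq : p.HolderConjugate q) (hh : AEMeasurable h μ)
    (hfin : ∀ Q ∈ F, ⨍⁻ y in Q.set, h y ∂μ ≠ ∞) :
    (∫⁻ x, dyadicLMaximal μ F h x ^ p ∂μ) ^ (1 / p) ≤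
      ENNReal.ofReal q * (∫⁻ x, h x ^ p ∂μ) ^ (1 / p) := by
  set M := dyadicLMaximal μ F h
  have hM : ∀ x, M x ≠ ∞ := fun x =>
    (dyadicLMaximal_le_lsparseOp.trans_lt ((lsparseOp_le_sum).trans_lt
      (sum_ne_top.2 hfin).lt_top)).ne
  have hI : ∫⁻ x, M x ^ p ∂μ ≠ ∞ :=
    ((lintegral_mono fun _ => rpow_le_rpow dyadicLMaximal_le_lsparseOp hpq.nonneg).trans_lt
      (lintegral_lsparseOp_rpow_lt_top hfin hpq.pos)).ne
  refine rpow_one_div_le_of_le_mul_rpow hpq hI ?_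
  calc ∫⁻ x, M x ^ p ∂μ ≤ ENNReal.ofReal q * ∫⁻ x, h x * M x ^ (p - 1) ∂μ := by
        rw [← hpq.conjExponent_eq]
        exact lintegral_dyadicLMaximal_rpow_le_lintegral_mul hpq.lt hh hM
    _ ≤ ENNReal.ofReal q *
          ((∫⁻ x, h x ^ p ∂μ) ^ (1 / p) * (∫⁻ x, (M x ^ (p - 1)) ^ q ∂μ) ^ (1 / q)) :=
        mul_le_mul_right (ENNReal.lintegral_mul_le_Lp_mul_Lq μ hpq hh
          (measurable_dyadicLMaximal.pow_const _).aemeasurable) _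
    _ = ENNReal.ofReal q * (∫⁻ x, h x ^ p ∂μ) ^ (1 / p) * (∫⁻ x, M x ^ p ∂μ) ^ (1 / q) := by
        simp_rw [← rpow_mul, hpq.sub_one_mul_conj, mul_assoc]

lemma lintegral_lsparseOp_mul {w : (Fin d → ℝ) → ℝ≥0∞} (hw : AEMeasurable w μ) :
    ∫⁻ x, lsparseOp μ S g x * w x ∂μ =
      ∑ Q ∈ S, (⨍⁻ y in Q.set, g y ∂μ) * ∫⁻ x in Q.set, w x ∂μ := by
  simp_rw [lsparseOp, Finset.sum_mul]
  rw [lintegral_finsetSum' S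
    (f := fun Q x => Q.set.indicator (fun _ => ⨍⁻ y in Q.set, g y ∂μ) x * w x)
    fun Q _ => (measurable_const.indicator Q.measurableSet_set).aemeasurable.mul hw]
  refine Finset.sum_congr rfl fun Q _ => ?_
  simp_rw [← indicator_mul_left]
  rw [lintegral_indicator Q.measurableSet_set, lintegral_const_mul'' _ hw.restrict]

theorem sum_setLAverage_mul_setLIntegral_le [IsLocallyFiniteMeasure μ] (hS : IsSparse μ S)
    (g w : (Fin d → ℝ) → ℝ≥0∞) :
    ∑ Q ∈ S, (⨍⁻ y in Q.set, g y ∂μ) * ∫⁻ x in Q.set, w x ∂μ ≤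
      2 * ∫⁻ x, dyadicLMaximal μ S g x * dyadicLMaximal μ S w x ∂μ := by
  obtain ⟨ES, hES, hdisj⟩ := hS
  have hESQ : ∀ Q ∈ S, (⨍⁻ y in Q.set, g y ∂μ) * ∫⁻ x in Q.set, w x ∂μ ≤
      2 * ∫⁻ x in ES Q, dyadicLMaximal μ S g x * dyadicLMaximal μ S w x ∂μ := fun Q hQ => by
    obtain ⟨hsub, hmeas, hlarge⟩ := hES Q hQ
    calc (⨍⁻ y in Q.set, g y ∂μ) * ∫⁻ x in Q.set, w x ∂μ
        = (⨍⁻ y in Q.set, g y ∂μ) * (⨍⁻ y in Q.set, w y ∂μ) * μ Q.set := by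
          rw [← measure_mul_setLAverage w (Q.measure_set_lt_top μ).ne]
          ring
      _ ≤ (⨍⁻ y in Q.set, g y ∂μ) * (⨍⁻ y in Q.set, w y ∂μ) * (2 * μ (ES Q)) :=
          mul_le_mul_right hlarge _
      _ = 2 * ∫⁻ _ in ES Q, (⨍⁻ y in Q.set, g y ∂μ) * (⨍⁻ y in Q.set, w y ∂μ) ∂μ := by
          rw [setLIntegral_const]
          ring
      _ ≤ 2 * ∫⁻ x in ES Q, dyadicLMaximal μ S g x * dyadicLMaximal μ S w x ∂μ :=
          mul_le_mul_right (setLIntegral_mono' hmeas fun x hx =>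
            mul_le_mul' (setLAverage_le_dyadicLMaximal hQ (hsub hx))
              (setLAverage_le_dyadicLMaximal hQ (hsub hx))) _
  calc ∑ Q ∈ S, (⨍⁻ y in Q.set, g y ∂μ) * ∫⁻ x in Q.set, w x ∂μ
      ≤ ∑ Q ∈ S, 2 * ∫⁻ x in ES Q, dyadicLMaximal μ S g x * dyadicLMaximal μ S w x ∂μ :=
        Finset.sum_le_sum hESQ
    _ = 2 * ∫⁻ x in ⋃ Q ∈ S, ES Q, dyadicLMaximal μ S g x * dyadicLMaximal μ S w x ∂μ := by
        rw [lintegral_biUnion_finset hdisj fun Q hQ => (hES Q hQ).2.1, Finset.mul_sum]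
    _ ≤ 2 * ∫⁻ x, dyadicLMaximal μ S g x * dyadicLMaximal μ S w x ∂μ :=
        mul_le_mul_right (setLIntegral_le_lintegral _ _) _

theorem lintegral_lsparseOp_rpow_le [IsLocallyFiniteMeasure μ] {p q : ℝ}
    (hpq : p.HolderConjugate q) (hS : IsSparse μ S) (hg : AEMeasurable g μ)
    (hfin : ∀ Q ∈ S, ⨍⁻ y in Q.set, g y ∂μ ≠ ∞) :
    (∫⁻ x, lsparseOp μ S g x ^ p ∂μ) ^ (1 / p) ≤
      2 * ENNReal.ofReal q * ENNReal.ofReal p * (∫⁻ x, g x ^ p ∂μ) ^ (1 / p) := by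
  set T := lsparseOp μ S g
  set w : (Fin d → ℝ) → ℝ≥0∞ := fun x => T x ^ (p - 1)
  have hw : Measurable w := measurable_lsparseOp.pow_const _
  have hwq : ∫⁻ x, w x ^ q ∂μ = ∫⁻ x, T x ^ p ∂μ := by
    simp_rw [w, ← rpow_mul, hpq.sub_one_mul_conj]
  have hwfin : ∀ Q ∈ S, ⨍⁻ y in Q.set, w y ∂μ ≠ ∞ := fun Q _ => by
    refine (setLAverage_lt_top (ne_top_of_le_ne_top ?_ (setLIntegral_mono' Q.measurableSet_set
      fun x _ => rpow_le_rpow lsparseOp_le_sum (sub_nonneg.2 hpq.lt.le)))).ne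
    rw [setLIntegral_const]
    exact mul_ne_top (rpow_ne_top_of_nonneg (sub_nonneg.2 hpq.lt.le) (sum_ne_top.2 hfin))
      (Q.measure_set_lt_top μ).ne
  refine rpow_one_div_le_of_le_mul_rpow hpq (lintegral_lsparseOp_rpow_lt_top hfin hpq.pos).ne ?_
  calc ∫⁻ x, T x ^ p ∂μ = ∫⁻ x, T x * w x ∂μ := lintegral_congr fun x => by
        have := ENNReal.rpow_add_of_nonneg (x := T x) 1 (p - 1) zero_le_one (sub_nonneg.2 hpq.lt.le)
        rwa [rpow_one, add_sub_cancel] at this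
    _ = ∑ Q ∈ S, (⨍⁻ y in Q.set, g y ∂μ) * ∫⁻ x in Q.set, w x ∂μ :=
        lintegral_lsparseOp_mul hw.aemeasurable
    _ ≤ 2 * ∫⁻ x, dyadicLMaximal μ S g x * dyadicLMaximal μ S w x ∂μ :=
        sum_setLAverage_mul_setLIntegral_le hS g w
    _ ≤ 2 * ((∫⁻ x, dyadicLMaximal μ S g x ^ p ∂μ) ^ (1 / p) *
          (∫⁻ x, dyadicLMaximal μ S w x ^ q ∂μ) ^ (1 / q)) :=
        mul_le_mul_right (ENNReal.lintegral_mul_le_Lp_mul_Lq μ hpq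
          measurable_dyadicLMaximal.aemeasurable measurable_dyadicLMaximal.aemeasurable) _
    _ ≤ 2 * ((ENNReal.ofReal q * (∫⁻ x, g x ^ p ∂μ) ^ (1 / p)) *
          (ENNReal.ofReal p * (∫⁻ x, w x ^ q ∂μ) ^ (1 / q))) := by
        gcongr
        · exact lintegral_dyadicLMaximal_rpow_le hpq hg hfin
        · exact lintegral_dyadicLMaximal_rpow_le hpq.symm hw.aemeasurable hwfin
    _ = 2 * ENNReal.ofReal q * ENNReal.ofReal p * (∫⁻ x, g x ^ p ∂μ) ^ (1 / p) *
          (∫⁻ x, T x ^ p ∂μ) ^ (1 / q) := by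
        rw [hwq]
        ring

end SparseOperator

section SparseDomination

variable {d : ℕ} {μ : Measure (Fin d → ℝ)} {S : Finset (DyadicCube d)}
  {f : (Fin d → ℝ) → ℝ} {x : Fin d → ℝ}

lemma avg_abs_nonneg {A : Set (Fin d → ℝ)} : 0 ≤ avg μ A fun y => |f y| :=
  smul_nonneg (inv_nonneg.2 toReal_nonneg) (integral_nonneg fun _ => abs_nonneg _)

lemma ofReal_avg_abs {A : Set (Fin d → ℝ)} (hf : IntegrableOn f A μ) :
    ENNReal.ofReal (avg μ A fun y => |f y|) = ⨍⁻ y in A, ‖f y‖ₑ ∂μ := by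
  rw [avg, ← measureReal_def, ← setAverage_eq,
    ofReal_setAverage hf.abs (ae_of_all _ fun _ => abs_nonneg _), setLAverage_eq]
  simp_rw [Real.enorm_eq_ofReal_abs]

lemma sparseOp_nonneg {q : ℝ} : 0 ≤ sparseOp μ q S f x :=
  Real.rpow_nonneg (Finset.sum_nonneg fun _ _ =>
    indicator_nonneg (fun _ _ => Real.rpow_nonneg avg_abs_nonneg q) x) _

lemma ofReal_sparseOp_le_lsparseOp {q : ℝ} (hq : 1 ≤ q) (hf : ∀ Q ∈ S, IntegrableOn f Q.set μ) :
    ENNReal.ofReal (sparseOp μ q S f x) ≤ lsparseOp μ S (fun y => ‖f y‖ₑ) x := by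
  set a : DyadicCube d → ℝ := fun Q => Q.set.indicator (fun _ => avg μ Q.set fun y => |f y|) x
  have ha : ∀ Q ∈ S, 0 ≤ a Q := fun Q _ => indicator_nonneg (fun _ _ => avg_abs_nonneg) x
  have hsparse : sparseOp μ q S f x = (∑ Q ∈ S, a Q ^ q) ^ (1 / q) := by
    refine congrArg (· ^ (1 / q)) (Finset.sum_congr rfl fun Q _ => ?_)
    by_cases hx : x ∈ Q.set <;> simp [a, hx, Real.zero_rpow (by linarith : q ≠ 0)]
  calc ENNReal.ofReal (sparseOp μ q S f x) ≤ ENNReal.ofReal (∑ Q ∈ S, a Q) :=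
        ofReal_le_ofReal (hsparse ▸ Real.sum_rpow_rpow_one_div_le_sum S ha hq)
    _ = ∑ Q ∈ S, ENNReal.ofReal (a Q) := ofReal_sum_of_nonneg ha
    _ = lsparseOp μ S (fun y => ‖f y‖ₑ) x := Finset.sum_congr rfl fun Q hQ => by
        by_cases hx : x ∈ Q.set <;> simp [a, hx, ofReal_avg_abs (hf Q hQ)]

lemma enorm_le_toNNReal_mul_lsparseOp {E : Type*} [NormedAddCommGroup E]
    {u : (Fin d → ℝ) → E} (hu : LocallyIntegrable u μ) {q C : ℝ} (hq : 1 ≤ q) {y : E}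
    (hy : ‖y‖ ≤ C * sparseOp μ q S (fun z => ‖u z‖) x) :
    ‖y‖ₑ ≤ C.toNNReal * lsparseOp μ S (fun z => ‖u z‖ₑ) x := by
  have hsparse := ofReal_sparseOp_le_lsparseOp (S := S) (x := x) hq fun Q _ =>
    (Q.integrableOn_set hu).norm
  simp only [enorm_norm] at hsparse
  calc ‖y‖ₑ ≤ ENNReal.ofReal C * ENNReal.ofReal (sparseOp μ q S (fun z => ‖u z‖) x) := by
        rw [← ofReal_norm, ← ofReal_mul' sparseOp_nonneg]
        exact ofReal_le_ofReal hy
    _ ≤ C.toNNReal * lsparseOp μ S (fun z => ‖u z‖ₑ) x := mul_le_mul_right hsparse _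

end SparseDomination

theorem sparse_domination_implies_HLProperty_general
    {d : ℕ}
    (E : Type*) [NormedAddCommGroup E] [Lattice E] [HasSolidNorm E] [IsOrderedAddMonoid E] [NormedSpace ℝ E]
    (q : ℝ) (hq : 1 ≤ q) (C : ℝ)
    (hdom : ∀ D : Finset (DyadicCube d), ∀ f : (Fin d → ℝ) → E,
      LocallyIntegrable f volume →
      ∃ S ⊆ D, IsSparse (volume : Measure (Fin d → ℝ)) S ∧
        ∀ᵐ x ∂(volume : Measure (Fin d → ℝ)),
          ‖dyadicMaximal volume D f x‖ ≤ C * sparseOp volume q S (fun y => ‖f y‖) x) :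
    ∀ p : ℝ, 1 < p → ∃ Cp : ℝ, ∀ (D : Finset (DyadicCube d)) (f : (Fin d → ℝ) → E),
      MemLp f (ENNReal.ofReal p) volume →
      eLpNorm (dyadicMaximal volume D f) (ENNReal.ofReal p) volume ≤
        ENNReal.ofReal Cp * eLpNorm f (ENNReal.ofReal p) volume := by
  intro p hp
  have hpq := Real.HolderConjugate.conjExponent hp
  refine ⟨C * (2 * p.conjExponent * p), fun D f hf => ?_⟩
  have hfloc : LocallyIntegrable f volume := hf.locallyIntegrable (one_le_ofReal.2 hp.le)
  obtain ⟨S, -, hS, hdomS⟩ := hdom D f hfloc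
  have hpointwise : ∀ᵐ x, ‖dyadicMaximal volume D f x‖ₑ ≤
      C.toNNReal * ‖lsparseOp volume S (fun y => ‖f y‖ₑ) x‖ₑ := by
    filter_upwards [hdomS] with x hx
    exact enorm_eq_self (lsparseOp volume S _ x) ▸ enorm_le_toNNReal_mul_lsparseOp hfloc hq hx
  have hfin : ∀ Q ∈ S, ⨍⁻ y in Q.set, ‖f y‖ₑ ∂volume ≠ ∞ := fun Q _ =>
    (setLAverage_lt_top (Q.integrableOn_set hfloc).2.ne).ne
  have hq' : 0 ≤ 2 * p.conjExponent := mul_nonneg zero_le_two hpq.symm.nonneg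
  calc eLpNorm (dyadicMaximal volume D f) (ENNReal.ofReal p) volume
      ≤ ENNReal.ofReal C *
          eLpNorm (lsparseOp volume S (fun y => ‖f y‖ₑ)) (ENNReal.ofReal p) volume :=
        eLpNorm_le_nnreal_smul_eLpNorm_of_ae_le_mul' hpointwise _
    _ ≤ ENNReal.ofReal C * (2 * ENNReal.ofReal p.conjExponent * ENNReal.ofReal p *
          eLpNorm f (ENNReal.ofReal p) volume) := by
        simp only [eLpNorm_ofReal_eq_lintegral hpq.pos, enorm_eq_self]
        exact mul_le_mul_right (lintegral_lsparseOp_rpow_le hpq hS hf.1.enorm hfin) _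
    _ = ENNReal.ofReal (C * (2 * p.conjExponent * p)) * eLpNorm f (ENNReal.ofReal p) volume := by
        rw [ofReal_mul' (mul_nonneg hq' hpq.nonneg), ofReal_mul hq', ofReal_mul zero_le_two,
          ofReal_ofNat]
        ring

/-- Section 2: sparse domination w.r.t. Lebesgue measure implies the
Hardy–Littlewood property.
If for some `q ∈ [1,∞)` the dyadic lattice maximal operator (w.r.t. Lebesgue measure) is
pointwise dominated by sparse operators `A^{dx}_{q,S}`, then for every `p ∈ (1,∞)` the
dyadic lattice maximal operators are bounded on `L^p(dx;E)` uniformly in `D`. -/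
theorem sparse_domination_implies_HLProperty
    {d : ℕ} (hd : 1 ≤ d)
    (E : Type*) [NormedAddCommGroup E] [Lattice E] [HasSolidNorm E] [IsOrderedAddMonoid E] [NormedSpace ℝ E] [CompleteSpace E]
    (q : ℝ) (hq : 1 ≤ q) (C : ℝ)
    (hdom : ∀ D : Finset (DyadicCube d), ∀ f : (Fin d → ℝ) → E,
      LocallyIntegrable f volume →
      ∃ S ⊆ D, IsSparse (volume : Measure (Fin d → ℝ)) S ∧
        ∀ᵐ x ∂(volume : Measure (Fin d → ℝ)),
          ‖dyadicMaximal volume D f x‖ ≤ C * sparseOp volume q S (fun y => ‖f y‖) x) :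
    ∀ p : ℝ, 1 < p → ∃ Cp : ℝ, ∀ (D : Finset (DyadicCube d)) (f : (Fin d → ℝ) → E),
      MemLp f (ENNReal.ofReal p) volume →
      eLpNorm (dyadicMaximal volume D f) (ENNReal.ofReal p) volume ≤
        ENNReal.ofReal Cp * eLpNorm f (ENNReal.ofReal p) volume :=
  sparse_domination_implies_HLProperty_general E q hq C hdom
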